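/- For every unweighted, connected simple graph G on n ≥ 2 vertices and every integer k with 2 ≤ k ≤ n, the k-way conductance satisfies φ_k(G) · diam(G) ≤ 24 · k · log n; that is, there exist k pairwise disjoint nonempty subsets S_1, …, S_k of the vertex set with φ(S_i) ≤ 24 · k · log n / diam(G) for every i, where log denotes the natural logarithm. -/

import Mathlib

/-! If `diam G ≤ 24 k log n`, any `k` singletons will do, since every conductance is at most 1.
Otherwise put `φ = 24 k log n / diam G` and `t ≈ diam G / (6k)`. Along a diametral shortest
path, `k + 1` vertices spaced `2t + 1` apart have pairwise disjoint balls of radius `t`; at most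
one of these carries more than half of the volume, and we discard it. Around each remaining
centre some ball of radius `r ≤ t` has conductance at most `φ`: otherwise, as long as a ball
holds at most half of the volume its cut equals `φ(ball) · vol(ball)`, so each unit step of
the radius multiplies the volume by at least `1 + φ`, and `(1 + φ)^t ≥ exp (φ t / 2) ≥ n²`
exceeds the volume of the whole graph. -/

open Finset Real

variable {V : Type*} [Fintype V] [DecidableEq V]

/-- The normalized Laplacian `I - D^{-1/2} A D^{-1/2}` of a simple graph. -/
noncomputable def normLap (G : SimpleGraph V) [DecidableRel G.Adj] : Matrix V V ℝ :=
  1 - Matrix.diagonal (fun v => (Real.sqrt (G.degree v))⁻¹) * G.adjMatrix ℝ *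
    Matrix.diagonal (fun v => (Real.sqrt (G.degree v))⁻¹)

lemma normLap_isHermitian (G : SimpleGraph V) [DecidableRel G.Adj] :
    (normLap G).IsHermitian := by
  unfold normLap
  apply Matrix.IsHermitian.sub (Matrix.isHermitian_one)
  rw [Matrix.IsHermitian, Matrix.conjTranspose_eq_transpose_of_trivial,
    Matrix.transpose_mul, Matrix.transpose_mul, Matrix.diagonal_transpose,
    G.transpose_adjMatrix, Matrix.mul_assoc]

/-- The `k`-th smallest eigenvalue (1-indexed) of the normalized Laplacian. -/
noncomputable def normLapEigenvalue (G : SimpleGraph V) [DecidableRel G.Adj]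
    (k : ℕ) (hk : k - 1 < Fintype.card V) : ℝ :=
  let f : Fin (Fintype.card V) → ℝ :=
    (normLap_isHermitian G).eigenvalues ∘ (Fintype.equivFin V).symm
  (f ∘ Tuple.sort f) ⟨k - 1, hk⟩

/-- Volume of a set of vertices: sum of degrees. -/
def vol (G : SimpleGraph V) [DecidableRel G.Adj] (S : Finset V) : ℕ :=
  ∑ v ∈ S, G.degree v

/-- Number of edges with exactly one endpoint in `S`. -/
def cut (G : SimpleGraph V) [DecidableRel G.Adj] (S : Finset V) : ℕ :=
  ((S ×ˢ Sᶜ).filter fun p => G.Adj p.1 p.2).card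

/-- Conductance of a set of vertices. -/
noncomputable def conductance (G : SimpleGraph V) [DecidableRel G.Adj] (S : Finset V) : ℝ :=
  (cut G S : ℝ) / min (vol G S) (vol G Sᶜ)

/-- Ball of radius `r` around a vertex in graph distance. -/
noncomputable def ball (G : SimpleGraph V) (v : V) (r : ℕ) : Finset V :=
  Finset.univ.filter fun u => G.dist v u ≤ r

/-- Set of vertices at distance at most `r` from a set `S`. -/
noncomputable def ballSet (G : SimpleGraph V) (S : Finset V) (r : ℕ) : Finset V :=
  Finset.univ.filter fun u => ∃ w ∈ S, G.dist w u ≤ r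

/-- Exterior neighborhood of `S`: vertices outside `S` adjacent to some vertex of `S`. -/
def nbhd (G : SimpleGraph V) [DecidableRel G.Adj] (S : Finset V) : Finset V :=
  Finset.univ.filter fun u => u ∉ S ∧ ∃ w ∈ S, G.Adj w u

/-- The `k`-way conductance `φ_k(G)`: the minimum, over all families of `k` pairwise
disjoint nonempty vertex subsets, of the largest conductance in the family. -/
noncomputable def phiK (G : SimpleGraph V) [DecidableRel G.Adj] (k : ℕ) : ℝ :=
  sInf {x | ∃ S : Fin k → Finset V, (∀ i, (S i).Nonempty) ∧
    Pairwise (Function.onFun Disjoint S) ∧ x = ⨆ i, conductance G (S i)}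

open Function

lemma SimpleGraph.Reachable.exists_dist_eq_of_le_dist {α : Type*} {G : SimpleGraph α} {u w : α}
    (huw : G.Reachable u w) {j : ℕ} (hj : j ≤ G.dist u w) : ∃ v, G.dist u v = j := by
  obtain ⟨p, hp⟩ := huw.exists_walk_length_eq_dist
  refine ⟨p.getVert j, ?_⟩
  rw [← SimpleGraph.length_eq_dist_of_subwalk hp (p.isSubwalk_take j), p.take_length]
  omega

section

variable {α : Type*} [Fintype α] {G : SimpleGraph α} [DecidableRel G.Adj]

lemma vol_mono {S T : Finset α} (h : S ⊆ T) : vol G S ≤ vol G T :=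
  Finset.sum_le_sum_of_subset h

lemma one_le_vol_of_nonempty [Nontrivial α] (hG : G.Connected) {S : Finset α}
    (hS : S.Nonempty) : 1 ≤ vol G S := by
  obtain ⟨v, hv⟩ := hS
  exact (hG.preconnected.degree_pos_of_nontrivial v).trans_le
    (single_le_sum (fun u _ => Nat.zero_le (G.degree u)) hv)

lemma vol_univ_lt_sq [Nonempty α] : vol G univ < Fintype.card α ^ 2 := by
  calc vol G univ < ∑ _v : α, Fintype.card α :=
        Finset.sum_lt_sum_of_nonempty univ_nonempty fun v _ => G.degree_lt_card_verts v
    _ = Fintype.card α ^ 2 := by rw [sum_const, card_univ, smul_eq_mul, sq]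

lemma card_le_vol_of_forall_adj {P : Finset (α × α)} {T : Finset α}
    (hP : ∀ p ∈ P, G.Adj p.1 p.2 ∧ p.2 ∈ T) : #P ≤ vol G T := by
  classical
  calc #P ≤ #(T.sigma fun b => G.neighborFinset b) := by
        refine card_le_card_of_injOn (fun p => ⟨p.2, p.1⟩) (fun p hp => ?_) fun p _ q _ h => ?_
        · simpa [(hP p hp).2] using (hP p hp).1.symm
        · simp only [Sigma.mk.injEq, heq_eq_eq] at h
          exact Prod.ext h.2 h.1
    _ = vol G T := by rw [card_sigma]; rfl

variable [DecidableEq α]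

lemma vol_add_vol_compl (S : Finset α) : vol G S + vol G Sᶜ = vol G univ := by
  rw [vol, vol, vol, ← sum_union disjoint_compl_right, union_compl]

lemma cut_le_vol_compl (S : Finset α) : cut G S ≤ vol G Sᶜ :=
  card_le_vol_of_forall_adj fun p hp => by
    simp only [mem_filter, mem_product] at hp
    exact ⟨hp.2, hp.1.2⟩

lemma cut_le_vol (S : Finset α) : cut G S ≤ vol G S := by
  rw [cut, ← card_image_of_injective _ Prod.swap_injective]
  refine card_le_vol_of_forall_adj fun p hp => ?_
  simp only [mem_image, mem_filter, mem_product] at hp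
  obtain ⟨q, ⟨⟨hq, -⟩, hadj⟩, rfl⟩ := hp
  exact ⟨hadj.symm, hq⟩

lemma conductance_nonneg (S : Finset α) : 0 ≤ conductance G S := by
  unfold conductance
  positivity

lemma conductance_le_one (S : Finset α) : conductance G S ≤ 1 := by
  refine div_le_one_of_le₀ ?_ (by positivity)
  exact_mod_cast le_min (cut_le_vol S) (cut_le_vol_compl S)

lemma cut_eq_vol_mul_conductance {S : Finset α} (h : 2 * vol G S ≤ vol G univ) :
    (cut G S : ℝ) = vol G S * conductance G S := by
  have hmin : min (vol G S) (vol G Sᶜ) = vol G S := by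
    have := vol_add_vol_compl (G := G) S
    exact min_eq_left (by omega)
  rcases Nat.eq_zero_or_pos (vol G S) with h0 | h0
  · have := cut_le_vol (G := G) S
    simp [h0, show cut G S = 0 by omega]
  · rw [conductance, hmin, mul_div_cancel₀ _ (by positivity)]

lemma exists_forall_ne_two_mul_vol_le {ι : Type*} [Nonempty ι] {S : ι → Finset α}
    (hS : Pairwise (Disjoint on S)) : ∃ j, ∀ i ≠ j, 2 * vol G (S i) ≤ vol G univ := by
  by_cases hbig : ∃ j, vol G univ < 2 * vol G (S j)
  · obtain ⟨j, hj⟩ := hbig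
    refine ⟨j, fun i hij => ?_⟩
    have : vol G (S i) + vol G (S j) ≤ vol G univ := by
      rw [vol, vol, ← sum_union (hS hij)]
      exact vol_mono (subset_univ _)
    omega
  · push Not at hbig
    exact ⟨Classical.arbitrary ι, fun i _ => hbig i⟩

end

section

variable {α : Type*} [Fintype α] {G : SimpleGraph α}

lemma mem_ball {c v : α} {r : ℕ} : v ∈ ball G c r ↔ G.dist c v ≤ r := by
  simp [ball]

lemma center_mem_ball (c : α) (r : ℕ) : c ∈ ball G c r := by
  simp [mem_ball]

lemma ball_mono (c : α) {r r' : ℕ} (h : r ≤ r') : ball G c r ⊆ ball G c r' :=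
  fun _ hv => mem_ball.2 ((mem_ball.1 hv).trans h)

lemma disjoint_ball_ball (hG : G.Connected) {a b : α} {r₁ r₂ : ℕ}
    (h : r₁ + r₂ < G.dist a b) : Disjoint (ball G a r₁) (ball G b r₂) := by
  refine Finset.disjoint_left.2 fun v ha hb => ?_
  have := hG.dist_triangle (u := a) (v := v) (w := b)
  rw [mem_ball] at ha hb
  rw [SimpleGraph.dist_comm (u := b)] at hb
  omega

lemma exists_pairwise_disjoint_balls (hG : G.Connected) {k s t : ℕ}
    (hdiam : k * s ≤ G.diam) (hts : 2 * t < s) :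
    ∃ c : Fin (k + 1) → α, Pairwise fun i j => Disjoint (ball G (c i) t) (ball G (c j) t) := by
  have : Nonempty α := hG.nonempty
  obtain ⟨u, w, huw⟩ := G.exists_dist_eq_diam
  have hc : ∀ i : Fin (k + 1), ∃ v, G.dist u v = i * s := fun i =>
    (hG u w).exists_dist_eq_of_le_dist <| huw ▸
      (Nat.mul_le_mul_right s (Nat.lt_succ_iff.1 i.isLt)).trans hdiam
  choose c hc using hc
  have hsep : ∀ i j : Fin (k + 1), i < j → Disjoint (ball G (c i) t) (ball G (c j) t) := by
    intro i j hij
    refine disjoint_ball_ball hG ?_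
    have htri := hG.dist_triangle (u := u) (v := c i) (w := c j)
    have : (i : ℕ) * s + s ≤ j * s := by
      rw [← Nat.succ_mul]; exact Nat.mul_le_mul_right s hij
    rw [hc, hc] at htri
    omega
  exact ⟨c, fun i j hij => (lt_or_gt_of_ne hij).elim (hsep i j) fun h => (hsep j i h).symm⟩

end

lemma sq_le_one_add_pow {x φ : ℝ} {t : ℕ} (hx : 0 < x) (hφ₀ : 0 ≤ φ) (hφ₂ : φ ≤ 2)
    (h : 4 * Real.log x ≤ φ * t) : x ^ 2 ≤ (1 + φ) ^ t := by
  rw [← Real.log_le_log_iff (by positivity) (by positivity), Real.log_pow, Real.log_pow,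
    Nat.cast_ofNat]
  have hlog := Real.le_log_one_add_of_nonneg hφ₀
  have : φ / 2 ≤ 2 * φ / (φ + 2) := by
    rw [le_div_iff₀ (by linarith)]
    nlinarith
  nlinarith [t.cast_nonneg (α := ℝ)]

lemma exists_radius_of_six_mul_le {k D : ℕ} (hk : 0 < k) (hD : 6 * k ≤ D) :
    ∃ t, k * (2 * t + 1) ≤ D ∧ D ≤ 6 * k * t := by
  refine ⟨D / (6 * k) + 1, ?_, (Nat.lt_mul_div_succ D (by omega)).le⟩
  have hq : 1 ≤ D / (6 * k) := (Nat.le_div_iff_mul_le (by omega)).2 (by omega)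
  have := Nat.mul_div_le D (6 * k)
  nlinarith

section

variable {α : Type*} [Fintype α] [DecidableEq α] {G : SimpleGraph α} [DecidableRel G.Adj]

lemma vol_ball_add_cut_le (hG : G.Connected) (c : α) (r : ℕ) :
    vol G (ball G c r) + cut G (ball G c r) ≤ vol G (ball G c (r + 1)) := by
  have hcut : cut G (ball G c r) ≤ vol G (ball G c (r + 1) \ ball G c r) := by
    refine card_le_vol_of_forall_adj fun p hp => ?_
    simp only [mem_filter, mem_product, mem_compl] at hp
    obtain ⟨⟨hp₁, hp₂⟩, hadj⟩ := hp
    refine ⟨hadj, mem_sdiff.2 ⟨mem_ball.2 ?_, hp₂⟩⟩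
    have := hG.dist_triangle (u := c) (v := p.1) (w := p.2)
    rw [SimpleGraph.dist_eq_one_iff_adj.2 hadj] at this
    exact this.trans (Nat.add_le_add_right (mem_ball.1 hp₁) 1)
  have := sum_sdiff (f := fun v => G.degree v) (ball_mono (G := G) c (Nat.le_add_right r 1))
  rw [vol, vol] at *
  omega

lemma one_add_pow_mul_vol_le (hG : G.Connected) {φ : ℝ} (hφ : 0 ≤ φ) (c : α) (t : ℕ)
    (hsmall : 2 * vol G (ball G c t) ≤ vol G univ)
    (hcond : ∀ r < t, φ ≤ conductance G (ball G c r)) :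
    (1 + φ) ^ t * vol G (ball G c 0) ≤ vol G (ball G c t) := by
  induction t with
  | zero => simp
  | succ t ih =>
    have hsmall' : 2 * vol G (ball G c t) ≤ vol G univ :=
      le_trans (Nat.mul_le_mul_left 2 (vol_mono (ball_mono c t.le_succ))) hsmall
    have hgrow : (vol G (ball G c t) : ℝ) + cut G (ball G c t) ≤ vol G (ball G c (t + 1)) := by
      exact_mod_cast vol_ball_add_cut_le hG c t
    rw [cut_eq_vol_mul_conductance hsmall'] at hgrow
    have ih := ih hsmall' fun r hr => hcond r (hr.trans t.lt_succ_self)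
    have := mul_le_mul_of_nonneg_left (hcond t t.lt_succ_self)
      (Nat.cast_nonneg (α := ℝ) (vol G (ball G c t)))
    calc (1 + φ) ^ (t + 1) * vol G (ball G c 0)
        = (1 + φ) * ((1 + φ) ^ t * vol G (ball G c 0)) := by ring
      _ ≤ (1 + φ) * vol G (ball G c t) := by gcongr
      _ ≤ _ := by linarith

lemma exists_conductance_ball_le [Nontrivial α] (hG : G.Connected) {φ : ℝ} (hφ₀ : 0 ≤ φ)
    (hφ₂ : φ ≤ 2) (c : α) {t : ℕ} (hsmall : 2 * vol G (ball G c t) ≤ vol G univ)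
    (hlog : 4 * Real.log (Fintype.card α) ≤ φ * t) :
    ∃ r ≤ t, conductance G (ball G c r) ≤ φ := by
  by_contra! hcond
  have hgrow := one_add_pow_mul_vol_le hG hφ₀ c t hsmall fun r hr => (hcond r hr.le).le
  have hpow := sq_le_one_add_pow (by exact_mod_cast Fintype.card_pos) hφ₀ hφ₂ hlog
  have hvol₀ : (1 : ℝ) ≤ vol G (ball G c 0) := by
    exact_mod_cast one_le_vol_of_nonempty hG ⟨c, center_mem_ball c 0⟩
  have hvol : (vol G (ball G c t) : ℝ) < Fintype.card α ^ 2 := by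
    exact_mod_cast (vol_mono (subset_univ _)).trans_lt vol_univ_lt_sq
  nlinarith [pow_nonneg (show (0 : ℝ) ≤ 1 + φ by linarith) t]

lemma exists_disjoint_balls_conductance_le [Nontrivial α] (hG : G.Connected) {φ : ℝ}
    (hφ₀ : 0 ≤ φ) (hφ₂ : φ ≤ 2) {k t : ℕ} (hdiam : k * (2 * t + 1) ≤ G.diam)
    (hlog : 4 * Real.log (Fintype.card α) ≤ φ * t) :
    ∃ S : Fin k → Finset α, (∀ i, (S i).Nonempty) ∧ Pairwise (Disjoint on S) ∧
      ∀ i, conductance G (S i) ≤ φ := by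
  obtain ⟨c, hc⟩ := exists_pairwise_disjoint_balls hG hdiam (Nat.lt_succ_self (2 * t))
  obtain ⟨j, hj⟩ := exists_forall_ne_two_mul_vol_le (G := G) hc
  choose r hrt hr using fun i : Fin k =>
    exists_conductance_ball_le hG hφ₀ hφ₂ (c (j.succAbove i)) (hj _ (j.succAbove_ne i)) hlog
  refine ⟨fun i => ball G (c (j.succAbove i)) (r i), fun i => ⟨_, center_mem_ball _ _⟩,
    fun i i' hii' => ?_, hr⟩
  exact (hc (Fin.succAbove_right_injective.ne hii')).mono (ball_mono _ (hrt i))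
    (ball_mono _ (hrt i'))

variable (G) in
lemma exists_disjoint_conductance_le_one {k : ℕ} (hk : k ≤ Fintype.card α) :
    ∃ S : Fin k → Finset α, (∀ i, (S i).Nonempty) ∧ Pairwise (Disjoint on S) ∧
      ∀ i, conductance G (S i) ≤ 1 := by
  let e : Fin k ↪ α := (Fin.castLEEmb hk).trans (Fintype.equivFin α).symm.toEmbedding
  exact ⟨fun i => {e i}, fun _ => singleton_nonempty _,
    fun _ _ h => disjoint_singleton.2 (e.injective.ne h), fun _ => conductance_le_one _⟩

lemma phiK_le {k : ℕ} {S : Fin k → Finset α} (hne : ∀ i, (S i).Nonempty)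
    (hS : Pairwise (Disjoint on S)) {B : ℝ} (hB : 0 ≤ B)
    (hSB : ∀ i, conductance G (S i) ≤ B) : phiK G k ≤ B := by
  refine le_trans (csInf_le ?_ ⟨S, hne, hS, rfl⟩) (Real.iSup_le hSB hB)
  refine ⟨0, ?_⟩
  rintro _ ⟨S', -, -, rfl⟩
  exact Real.iSup_nonneg fun i => conductance_nonneg _

end

/-- `φ_k(G) ⬝ diam(G) ≤ 24 k log n`: there are `k` pairwise disjoint nonempty vertex
subsets each of conductance at most `24 k log n / diam(G)`. -/
theorem phiK_diam_le (G : SimpleGraph V) [DecidableRel G.Adj] (hG : G.Connected)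
    (hn : 2 ≤ Fintype.card V) (k : ℕ) (hk2 : 2 ≤ k) (hkn : k ≤ Fintype.card V) :
    phiK G k * G.diam ≤ 24 * k * Real.log (Fintype.card V) ∧
      ∃ S : Fin k → Finset V, (∀ i, (S i).Nonempty) ∧
        Pairwise (Function.onFun Disjoint S) ∧
        ∀ i, conductance G (S i) ≤ 24 * k * Real.log (Fintype.card V) / G.diam := by
  have : Nontrivial V := Fintype.one_lt_card_iff_nontrivial.1 hn
  set L := Real.log (Fintype.card V)
  have hL : 1 / 4 < L := by
    have := Real.log_le_log two_pos (by exact_mod_cast hn : (2 : ℝ) ≤ Fintype.card V)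
    linarith [Real.log_two_gt_d9]
  have hD : (0 : ℝ) < G.diam :=
    Nat.cast_pos.2 (Nat.pos_of_ne_zero (SimpleGraph.connected_iff_diam_ne_zero.1 hG))
  have hB : 0 ≤ 24 * k * L / G.diam := by positivity
  obtain ⟨S, hne, hS, hSB⟩ : ∃ S : Fin k → Finset V, (∀ i, (S i).Nonempty) ∧
      Pairwise (Disjoint on S) ∧ ∀ i, conductance G (S i) ≤ 24 * k * L / G.diam := by
    rcases le_or_gt (G.diam : ℝ) (24 * k * L) with hsmall | hlarge
    · obtain ⟨S, hne, hS, hS1⟩ := exists_disjoint_conductance_le_one G hkn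
      exact ⟨S, hne, hS, fun i => (hS1 i).trans ((one_le_div hD).2 hsmall)⟩
    · have h6k : 6 * k ≤ G.diam := by
        have : ((6 * k : ℕ) : ℝ) < G.diam := by push_cast; nlinarith
        exact_mod_cast this.le
      obtain ⟨t, hkt, htD⟩ := exists_radius_of_six_mul_le (by omega) h6k
      have htD : (G.diam : ℝ) ≤ 6 * k * t := by exact_mod_cast htD
      refine exists_disjoint_balls_conductance_le hG hB ?_ hkt ?_
      · rw [div_le_iff₀ hD]; linarith
      · rw [div_mul_eq_mul_div, le_div_iff₀ hD]; nlinarith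
  refine ⟨?_, S, hne, hS, hSB⟩
  calc phiK G k * G.diam ≤ 24 * k * L / G.diam * G.diam := by
        gcongr; exact phiK_le hne hS hB hSB
    _ = 24 * k * L := div_mul_cancel₀ _ hD.ne'
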